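/- arXiv:1601.04320 — 6 statements merged into one kernel-verified Lean document; each statement's English description precedes it below -/
import Mathlib

section
/- Let A be a commutative ring, n a finite index type, M an n×n matrix over A, and a ≠ b two indices such that row a and row b of M vanish outside columns a and b, and such that M_{a,a} = 0, M_{a,b} = t, M_{b,a} = t, M_{b,b} = t·c for elements t, c ∈ A. Then for all x₁, x₂, x₃, x₄ ∈ A, the (a,a) entry of the product (M − x₁I)(M − x₂I)(M − x₃I)(M − x₄I) equals e₄ + t²e₂ − t³c·e₁ + t⁴ + t⁴c², where e₁, e₂, e₃, e₄ denote the elementary symmetric polynomials in x₁, x₂, x₃, x₄. -/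
private lemma aux_mul {A : Type*} [CommRing A] {n : Type*} [Fintype n] [DecidableEq n]
    (P Q : Matrix n n A) (a b : n) (hab : a ≠ b)
    (hP : ∀ j, j ≠ a → j ≠ b → P a j = 0) (j : n) :
    (P * Q) a j = P a a * Q a j + P a b * Q b j := by
  rw [Matrix.mul_apply,
    ← Finset.sum_subset (Finset.subset_univ ({a, b} : Finset n))
      (fun k _ hk => by
        simp only [Finset.mem_insert, Finset.mem_singleton, not_or] at hk
        rw [hP k hk.1 hk.2, zero_mul]),
    Finset.sum_insert (by simp [hab]), Finset.sum_singleton]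

theorem stmt_5 {A : Type*} [CommRing A] {n : Type*} [Fintype n] [DecidableEq n]
    (M : Matrix n n A) (a b : n) (hab : a ≠ b) (t c : A)
    (hrowa : ∀ j, j ≠ a → j ≠ b → M a j = 0)
    (hrowb : ∀ j, j ≠ a → j ≠ b → M b j = 0)
    (haa : M a a = 0) (hab' : M a b = t) (hba : M b a = t) (hbb : M b b = t * c) :
    ∀ x₁ x₂ x₃ x₄ : A,
      ((M - x₁ • 1) * (M - x₂ • 1) * (M - x₃ • 1) * (M - x₄ • 1)) a a =
        x₁ * x₂ * x₃ * x₄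
          + t ^ 2 * (x₁ * x₂ + x₁ * x₃ + x₁ * x₄ + x₂ * x₃ + x₂ * x₄ + x₃ * x₄)
          - t ^ 3 * c * (x₁ + x₂ + x₃ + x₄)
          + t ^ 4 + t ^ 4 * c ^ 2 := by
  intro x₁ x₂ x₃ x₄
  have hNa : ∀ x : A, ∀ j, j ≠ a → j ≠ b → (M - x • 1) a j = 0 := fun x j h1 h2 => by
    simp [Matrix.sub_apply, hrowa j h1 h2, Matrix.one_apply_ne (Ne.symm h1)]
  have hNb : ∀ x : A, ∀ j, j ≠ a → j ≠ b → (M - x • 1) b j = 0 := fun x j h1 h2 => by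
    simp [Matrix.sub_apply, hrowb j h1 h2, Matrix.one_apply_ne (Ne.symm h2)]
  have eaa : ∀ x : A, (M - x • 1) a a = -x := fun x => by simp [haa]
  have eab : ∀ x : A, (M - x • 1) a b = t := fun x => by
    simp [Matrix.one_apply_ne hab, hab']
  have eba : ∀ x : A, (M - x • 1) b a = t := fun x => by
    simp [Matrix.one_apply_ne hab.symm, hba]
  have ebb : ∀ x : A, (M - x • 1) b b = t * c - x := fun x => by simp [hbb]
  -- P2 = N1 * N2
  have h2 : ∀ j, ((M - x₁ • 1) * (M - x₂ • 1)) a j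
      = (M - x₁ • 1) a a * (M - x₂ • 1) a j + (M - x₁ • 1) a b * (M - x₂ • 1) b j :=
    aux_mul _ _ a b hab (hNa x₁)
  have hP2s : ∀ j, j ≠ a → j ≠ b → ((M - x₁ • 1) * (M - x₂ • 1)) a j = 0 := by
    intro j h1 h2'
    rw [h2 j, hNa x₂ j h1 h2', hNb x₂ j h1 h2', mul_zero, mul_zero, add_zero]
  have h3 : ∀ j, ((M - x₁ • 1) * (M - x₂ • 1) * (M - x₃ • 1)) a j
      = ((M - x₁ • 1) * (M - x₂ • 1)) a a * (M - x₃ • 1) a j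
        + ((M - x₁ • 1) * (M - x₂ • 1)) a b * (M - x₃ • 1) b j :=
    aux_mul _ _ a b hab hP2s
  have hP3s : ∀ j, j ≠ a → j ≠ b →
      ((M - x₁ • 1) * (M - x₂ • 1) * (M - x₃ • 1)) a j = 0 := by
    intro j h1 h2'
    rw [h3 j, hNa x₃ j h1 h2', hNb x₃ j h1 h2', mul_zero, mul_zero, add_zero]
  have h4 := aux_mul ((M - x₁ • 1) * (M - x₂ • 1) * (M - x₃ • 1)) (M - x₄ • 1) a b hab hP3s a
  rw [h4, h3 a, h3 b, h2 a, h2 b]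
  simp only [eaa, eab, eba, ebb]
  ring
end

section
/- Let K be a field, t ∈ K with t ≠ 0 and t⁸ ≠ 1, and let x₁, x₂, x₃ ∈ K satisfy the three equations: (i) −x₁x₂x₃ − t²(x₁ + x₂ + x₃) + t³(t⁴ − t⁻⁴) = 0; (ii) t(x₁x₂ + x₁x₃ + x₂x₃) − t²(t⁴ − t⁻⁴)(x₁ + x₂ + x₃) + t³(t⁴ − t⁻⁴)² + t³ = 0; (iii) −x₁x₂x₃ − t⁻⁶(x₁ + x₂ + x₃) = 0. Then the multiset {x₁, x₂, x₃} equals the multiset {t⁵, t⁻³, −t⁻³}. -/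
/-!
Subtracting (iii) from (i) leaves `(t⁸ - 1)(x₁ + x₂ + x₃ - t⁵) = 0`, so `x₁ + x₂ + x₃ = t⁵`;
then (i) gives `x₁x₂x₃ = -t⁻¹` and (ii) gives `x₁x₂ + x₁x₃ + x₂x₃ = -t⁻⁶`. These are the
elementary symmetric functions of `t⁵, t⁻³, -t⁻³`, and a triple is determined up to order by its
elementary symmetric functions, being the roots of the cubic they define.
-/

open Polynomial

lemma prod_X_sub_C_three {R : Type*} [CommRing R] (x₁ x₂ x₃ : R) :
    (X - C x₁) * (X - C x₂) * (X - C x₃) =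
      X ^ 3 - C (x₁ + x₂ + x₃) * X ^ 2 + C (x₁ * x₂ + x₁ * x₃ + x₂ * x₃) * X
        - C (x₁ * x₂ * x₃) := by
  simp only [map_add, map_mul]
  ring

theorem Multiset.triple_eq_of_esymm_eq {R : Type*} [CommRing R] [IsDomain R]
    {x₁ x₂ x₃ y₁ y₂ y₃ : R}
    (h₁ : x₁ + x₂ + x₃ = y₁ + y₂ + y₃)
    (h₂ : x₁ * x₂ + x₁ * x₃ + x₂ * x₃ = y₁ * y₂ + y₁ * y₃ + y₂ * y₃)
    (h₃ : x₁ * x₂ * x₃ = y₁ * y₂ * y₃) :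
    ({x₁, x₂, x₃} : Multiset R) = {y₁, y₂, y₃} := by
  have roots_eq (a b c : R) : ((X - C a) * (X - C b) * (X - C c)).roots = {a, b, c} := by
    simpa [Multiset.prod_cons, mul_assoc] using
      roots_multiset_prod_X_sub_C ({a, b, c} : Multiset R)
  rw [← roots_eq, ← roots_eq, prod_X_sub_C_three, prod_X_sub_C_three, h₁, h₂, h₃]

theorem stmt_7 {K : Type*} [Field K] (t : K) (ht : t ≠ 0) (ht8 : t ^ 8 ≠ 1)
    (x₁ x₂ x₃ : K)
    (h1 : -(x₁ * x₂ * x₃) - t ^ 2 * (x₁ + x₂ + x₃) + t ^ 3 * (t ^ 4 - t⁻¹ ^ 4) = 0)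
    (h2 : t * (x₁ * x₂ + x₁ * x₃ + x₂ * x₃)
          - t ^ 2 * (t ^ 4 - t⁻¹ ^ 4) * (x₁ + x₂ + x₃)
          + t ^ 3 * (t ^ 4 - t⁻¹ ^ 4) ^ 2 + t ^ 3 = 0)
    (h3 : -(x₁ * x₂ * x₃) - t⁻¹ ^ 6 * (x₁ + x₂ + x₃) = 0) :
    ({x₁, x₂, x₃} : Multiset K) = {t ^ 5, t⁻¹ ^ 3, -t⁻¹ ^ 3} := by
  field_simp at h1 h2 h3
  have e₁ : x₁ + x₂ + x₃ = t ^ 5 := by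
    have h : (t ^ 8 - 1) * (x₁ + x₂ + x₃ - t ^ 5) = 0 := by
      linear_combination h3 - t ^ 5 * h1
    exact sub_eq_zero.mp ((mul_eq_zero.mp h).resolve_left (sub_ne_zero.mpr ht8))
  have e₂ : t ^ 6 * (x₁ * x₂ + x₁ * x₃ + x₂ * x₃) + 1 = 0 := by
    refine (mul_eq_zero.mp (?_ : t ^ 7 * _ = 0)).resolve_left (pow_ne_zero 7 ht)
    linear_combination t ^ 7 * h2 + t ^ 10 * (t ^ 8 - 1) * e₁
  apply Multiset.triple_eq_of_esymm_eq
  · rw [e₁]; ring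
  · field_simp; linear_combination e₂
  · field_simp; linear_combination -h1 - t ^ 3 * e₁
end

section
/- Let K be a field, s ∈ K with s ≠ 0 and s⁶ ≠ 1, and let x₁, x₂, x₃ ∈ K satisfy the three equations: (i) −x₁x₂x₃ − s²(x₁ + x₂ + x₃) + s⁶ − 1 = 0; (ii) s(x₁x₂ + x₁x₃ + x₂x₃) − s²(s³ − s⁻³)(x₁ + x₂ + x₃) + s⁹ + s⁻³ − s³ = 0; (iii) −x₁x₂x₃ − s⁻⁴(x₁ + x₂ + x₃) = 0. Then the multiset {x₁, x₂, x₃} equals the multiset {s⁴, s⁻², −s⁻²}. -/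
open Polynomial in
theorem stmt_8 {K : Type*} [Field K] (s : K) (hs : s ≠ 0) (hs6 : s ^ 6 ≠ 1)
    (x₁ x₂ x₃ : K)
    (h1 : -(x₁ * x₂ * x₃) - s ^ 2 * (x₁ + x₂ + x₃) + s ^ 6 - 1 = 0)
    (h2 : s * (x₁ * x₂ + x₁ * x₃ + x₂ * x₃)
          - s ^ 2 * (s ^ 3 - s⁻¹ ^ 3) * (x₁ + x₂ + x₃)
          + s ^ 9 + s⁻¹ ^ 3 - s ^ 3 = 0)
    (h3 : -(x₁ * x₂ * x₃) - s⁻¹ ^ 4 * (x₁ + x₂ + x₃) = 0) :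
    ({x₁, x₂, x₃} : Multiset K) = {s ^ 4, s⁻¹ ^ 2, -s⁻¹ ^ 2} := by
  have hs6' : s ^ 6 - 1 ≠ 0 := sub_ne_zero.mpr hs6
  field_simp at h1 h2 h3
  have he1 : x₁ + x₂ + x₃ = s ^ 4 := by
    have key : (s ^ 6 - 1) * (x₁ + x₂ + x₃ - s ^ 4) = 0 := by
      linear_combination (-(s^4))*h1 + h3
    rcases mul_eq_zero.mp key with h | h
    · exact absurd h hs6'
    · linear_combination h
  have he3 : x₁ * x₂ * x₃ = -1 := by
    have key : s ^ 4 * (x₁ * x₂ * x₃ + 1) = 0 := by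
      linear_combination -h3 - he1
    rcases mul_eq_zero.mp key with h | h
    · exact absurd h (pow_ne_zero _ hs)
    · linear_combination h
  have he2 : x₁ * x₂ + x₁ * x₃ + x₂ * x₃ = -(s⁻¹ ^ 4) := by
    have key : s ^ 4 * (x₁ * x₂ + x₁ * x₃ + x₂ * x₃) = -1 := by
      linear_combination h2 + s^2*(s^6-1)*he1
    field_simp
    linear_combination key
  have hC : (C s) * (C s⁻¹) = (1 : K[X]) := by
    rw [← C_mul, mul_inv_cancel₀ hs, map_one]
  have hc1 : (C x₁ + C x₂ + C x₃ : K[X]) = C s ^ 4 := by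
    rw [← C_add, ← C_add, he1, C_pow]
  have hc2 : (C x₁ * C x₂ + C x₁ * C x₃ + C x₂ * C x₃ : K[X]) = -(C s⁻¹ ^ 4) := by
    rw [← C_mul, ← C_mul, ← C_mul, ← C_add, ← C_add, he2, map_neg, C_pow]
  have hc3 : (C x₁ * C x₂ * C x₃ : K[X]) = -1 := by
    rw [← C_mul, ← C_mul, he3, map_neg, map_one]
  have heq : (({x₁, x₂, x₃} : Multiset K).map fun a => X - C a).prod
      = (({s ^ 4, s⁻¹ ^ 2, -s⁻¹ ^ 2} : Multiset K).map fun a => X - C a).prod := by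
    simp only [Multiset.insert_eq_cons, Multiset.map_cons, Multiset.map_singleton,
      Multiset.prod_cons, Multiset.prod_singleton, map_pow, map_neg]
    linear_combination (-(X^2))*hc1 + X*hc2 - hc3
      - ((C s * C s⁻¹)^3 + (C s * C s⁻¹)^2 + C s * C s⁻¹ + 1) * hC
  have r1 := roots_multiset_prod_X_sub_C ({x₁, x₂, x₃} : Multiset K)
  have r2 := roots_multiset_prod_X_sub_C ({s ^ 4, s⁻¹ ^ 2, -s⁻¹ ^ 2} : Multiset K)
  rw [← r1, ← r2, heq]
end

section
/- Let K be a field, u ∈ K with u ≠ 0 and u⁴ ≠ 1, set c = u² − u⁻², and let x₁, x₂, x₃, x₄ ∈ K with elementary symmetric polynomials e₁, e₂, e₃, e₄ satisfy the four equations: (1) e₄ + u²e₂ − u³c·e₁ + u⁴ + u⁴c² = 0; (2) −e₃ + uc·e₂ − (u² + u²c²)·e₁ + u³c³ + 2u³c = 0; (3) e₄ + u²e₂ + u⁴ = 0; (4) −u·e₃ − u³·e₁ = 0. Then the multiset {x₁, x₂, x₃, x₄} equals the multiset {u³, u, −u, −u⁻¹}. -/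
open Polynomial

theorem stmt_9 {K : Type*} [Field K] (u : K) (hu : u ≠ 0) (hu4 : u ^ 4 ≠ 1)
    (c : K) (hc : c = u ^ 2 - u⁻¹ ^ 2)
    (x₁ x₂ x₃ x₄ : K)
    (e₁ e₂ e₃ e₄ : K)
    (he₁ : e₁ = x₁ + x₂ + x₃ + x₄)
    (he₂ : e₂ = x₁ * x₂ + x₁ * x₃ + x₁ * x₄ + x₂ * x₃ + x₂ * x₄ + x₃ * x₄)
    (he₃ : e₃ = x₁ * x₂ * x₃ + x₁ * x₂ * x₄ + x₁ * x₃ * x₄ + x₂ * x₃ * x₄)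
    (he₄ : e₄ = x₁ * x₂ * x₃ * x₄)
    (h1 : e₄ + u ^ 2 * e₂ - u ^ 3 * c * e₁ + u ^ 4 + u ^ 4 * c ^ 2 = 0)
    (h2 : -e₃ + u * c * e₂ - (u ^ 2 + u ^ 2 * c ^ 2) * e₁ + u ^ 3 * c ^ 3 + 2 * u ^ 3 * c = 0)
    (h3 : e₄ + u ^ 2 * e₂ + u ^ 4 = 0)
    (h4 : -(u * e₃) - u ^ 3 * e₁ = 0) :
    ({x₁, x₂, x₃, x₄} : Multiset K) = {u ^ 3, u, -u, -u⁻¹} := by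
  obtain ⟨w, hwinv⟩ : ∃ w, u⁻¹ = w := ⟨u⁻¹, rfl⟩
  have huw : u * w = 1 := by rw [← hwinv]; exact mul_inv_cancel₀ hu
  rw [hwinv] at hc ⊢
  subst hc
  have hcne : u ^ 2 - w ^ 2 ≠ 0 := by
    intro h
    apply hu4
    have : u ^ 4 = (u * w) ^ 2 := by linear_combination u ^ 2 * h
    rw [huw] at this; simpa using this
  have hE1 : e₁ = u ^ 3 - w := by
    have h5 : u ^ 3 * (u ^ 2 - w ^ 2) * e₁ = u ^ 3 * (u ^ 2 - w ^ 2) * (u ^ 3 - w) := by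
      linear_combination (-1 : K) * h1 + h3 + (-(u ^ 3 * w * (u ^ 2 - w ^ 2))) * huw
    exact mul_left_cancel₀ (mul_ne_zero (pow_ne_zero 3 hu) hcne) h5
  have hE3 : e₃ = u - u ^ 5 := by
    have h5 : u * e₃ = u * (u - u ^ 5) := by
      linear_combination (-1 : K) * h4 + (-(u ^ 3)) * hE1 + u ^ 2 * huw
    exact mul_left_cancel₀ hu h5
  have hE2 : e₂ = -(u ^ 2 + u ^ 2) := by
    have h5 : u * (u ^ 2 - w ^ 2) * e₂ = u * (u ^ 2 - w ^ 2) * (-(u ^ 2 + u ^ 2)) := by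
      linear_combination h2 + hE3 + (u ^ 2 + u ^ 2 * (u ^ 2 - w ^ 2) ^ 2) * hE1 +
        (u ^ 6 * w - 2 * u ^ 4 * w ^ 3 + u ^ 2 * w ^ 5 - u) * huw
    exact mul_left_cancel₀ (mul_ne_zero hu hcne) h5
  have hE4 : e₄ = u ^ 4 := by linear_combination h3 - u ^ 2 * hE2
  have hQ : ∀ a b c d : K,
      (X - C a) * ((X - C b) * ((X - C c) * (X - C d))) =
        X ^ 4 - C (a + b + c + d) * X ^ 3 +
          C (a * b + a * c + a * d + b * c + b * d + c * d) * X ^ 2 -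
          C (a * b * c + a * b * d + a * c * d + b * c * d) * X + C (a * b * c * d) := by
    intro a b c d
    simp only [map_add, map_mul]
    ring
  have key : (({x₁, x₂, x₃, x₄} : Multiset K).map fun a => X - C a).prod
      = (({u ^ 3, u, -u, -w} : Multiset K).map fun a => X - C a).prod := by
    simp only [Multiset.insert_eq_cons, Multiset.map_cons, Multiset.map_singleton,
      Multiset.prod_cons, Multiset.prod_singleton]
    rw [hQ, hQ, ← he₁, ← he₂, ← he₃, ← he₄, hE1, hE2, hE3, hE4]
    have hCuw : (C u : K[X]) * C w = 1 := by rw [← map_mul, huw, map_one]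
    simp only [map_add, map_sub, map_neg, map_mul, map_pow]
    linear_combination (X * C u + X ^ 2 * C u ^ 2 - (C u) ^ 4) * hCuw
  have hroots := congrArg Polynomial.roots key
  rwa [Polynomial.roots_multiset_prod_X_sub_C, Polynomial.roots_multiset_prod_X_sub_C] at hroots
end

section
/- Let K be a field, s ∈ K with s ≠ 0 and s⁶ ≠ 1, n a finite index type, and M an n×n matrix over K. Assume there are indices a ≠ b such that rows a and b of M vanish outside columns a and b, with M_{a,a} = 0, M_{a,b} = M_{b,a} = s, M_{b,b} = s(s³ − s⁻³); and indices c ≠ d such that row c of M vanishes outside columns c and d, column c of M vanishes outside rows c and d, with M_{c,c} = M_{d,d} = 0, M_{c,d} = M_{d,c} = s⁻². If x₁, x₂, x₃ ∈ K satisfy (M − x₁I)(M − x₂I)(M − x₃I) = 0, then the multiset {x₁, x₂, x₃} equals the multiset {s⁴, s⁻², −s⁻²}. -/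
open Polynomial in
private lemma roots_three {K : Type*} [Field K] (p q r : K) :
    ((X - C p) * (X - C q) * (X - C r)).roots = {p, q, r} := by
  rw [Polynomial.roots_mul (mul_ne_zero (mul_ne_zero (X_sub_C_ne_zero p) (X_sub_C_ne_zero q)) (X_sub_C_ne_zero r)),
    Polynomial.roots_mul (mul_ne_zero (X_sub_C_ne_zero p) (X_sub_C_ne_zero q)),
    roots_X_sub_C, roots_X_sub_C, roots_X_sub_C]
  rfl

open Polynomial in
private lemma multiset_of_sym {K : Type*} [Field K] (p q r p' q' r' : K)
    (h1 : p + q + r = p' + q' + r')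
    (h2 : p * q + p * r + q * r = p' * q' + p' * r' + q' * r')
    (h3 : p * q * r = p' * q' * r') :
    ({p, q, r} : Multiset K) = {p', q', r'} := by
  have expand : ∀ a b c : K, (X - C a) * (X - C b) * (X - C c)
      = X ^ 3 - C (a + b + c) * X ^ 2 + C (a * b + a * c + b * c) * X - C (a * b * c) := by
    intro a b c
    simp only [map_add, map_mul]
    ring
  have hpoly : (X - C p) * (X - C q) * (X - C r) = (X - C p') * (X - C q') * (X - C r') := by
    rw [expand, expand, h1, h2, h3]
  rw [← roots_three p q r, ← roots_three p' q' r', hpoly]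

private lemma sum_sparse_left {K : Type*} [Field K] {n : Type*} [Fintype n] [DecidableEq n]
    {c d : n} (hcd : c ≠ d) (v f : n → K) (hv : ∀ k, k ≠ c → k ≠ d → v k = 0) :
    ∑ k, v k * f k = v c * f c + v d * f d := by
  rw [← Finset.sum_subset (Finset.subset_univ ({c, d} : Finset n))]
  · rw [Finset.sum_pair hcd]
  · intro k _ hk
    simp only [Finset.mem_insert, Finset.mem_singleton] at hk
    push_neg at hk
    rw [hv k hk.1 hk.2, zero_mul]

private lemma sum_sparse_right {K : Type*} [Field K] {n : Type*} [Fintype n] [DecidableEq n]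
    {c d : n} (hcd : c ≠ d) (f v : n → K) (hv : ∀ k, k ≠ c → k ≠ d → v k = 0) :
    ∑ k, f k * v k = f c * v c + f d * v d := by
  rw [← Finset.sum_subset (Finset.subset_univ ({c, d} : Finset n))]
  · rw [Finset.sum_pair hcd]
  · intro k _ hk
    simp only [Finset.mem_insert, Finset.mem_singleton] at hk
    push_neg at hk
    rw [hv k hk.1 hk.2, mul_zero]

theorem stmt_11 {K : Type*} [Field K] (s : K) (hs : s ≠ 0) (hs6 : s ^ 6 ≠ 1)
    {n : Type*} [Fintype n] [DecidableEq n] (M : Matrix n n K)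
    (a b : n) (hab : a ≠ b)
    (hrowa : ∀ j, j ≠ a → j ≠ b → M a j = 0)
    (hrowb : ∀ j, j ≠ a → j ≠ b → M b j = 0)
    (haa : M a a = 0) (hab' : M a b = s) (hba : M b a = s)
    (hbb : M b b = s * (s ^ 3 - s⁻¹ ^ 3))
    (c d : n) (hcd : c ≠ d)
    (hrowc : ∀ j, j ≠ c → j ≠ d → M c j = 0)
    (hcolc : ∀ j, j ≠ c → j ≠ d → M j c = 0)
    (hcc : M c c = 0) (hdd : M d d = 0)
    (hcd' : M c d = s⁻¹ ^ 2) (hdc : M d c = s⁻¹ ^ 2)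
    (x₁ x₂ x₃ : K)
    (hmin : (M - x₁ • 1) * (M - x₂ • 1) * (M - x₃ • 1) = 0) :
    ({x₁, x₂, x₃} : Multiset K) = {s ^ 4, s⁻¹ ^ 2, -s⁻¹ ^ 2} := by
  set u := s⁻¹ with hu
  have hsu : s * u = 1 := mul_inv_cancel₀ hs
  have hbb' : M b b = s ^ 4 - u ^ 2 := by
    rw [hbb, hu]; field_simp
  -- entry values
  have vaa : ∀ x : K, (M - x • 1) a a = -x := by
    intro x; simp [Matrix.sub_apply, Matrix.smul_apply, Matrix.one_apply, haa]
  have vab : ∀ x : K, (M - x • 1) a b = s := by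
    intro x; simp [Matrix.sub_apply, Matrix.smul_apply, Matrix.one_apply, hab', hab]
  have vba : ∀ x : K, (M - x • 1) b a = s := by
    intro x; simp [Matrix.sub_apply, Matrix.smul_apply, Matrix.one_apply, hba, hab.symm]
  have vbb : ∀ x : K, (M - x • 1) b b = s ^ 4 - u ^ 2 - x := by
    intro x; simp [Matrix.sub_apply, Matrix.smul_apply, Matrix.one_apply, hbb', sub_sub]
  have vcc : ∀ x : K, (M - x • 1) c c = -x := by
    intro x; simp [Matrix.sub_apply, Matrix.smul_apply, Matrix.one_apply, hcc]
  have vcd : ∀ x : K, (M - x • 1) c d = u ^ 2 := by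
    intro x; simp [Matrix.sub_apply, Matrix.smul_apply, Matrix.one_apply, hcd', hcd]
  have vdc : ∀ x : K, (M - x • 1) d c = u ^ 2 := by
    intro x; simp [Matrix.sub_apply, Matrix.smul_apply, Matrix.one_apply, hdc, hcd.symm]
  have vdd : ∀ x : K, (M - x • 1) d d = -x := by
    intro x; simp [Matrix.sub_apply, Matrix.smul_apply, Matrix.one_apply, hdd]
  -- sparsity
  have rowA : ∀ (x : K) k, k ≠ a → k ≠ b → (M - x • 1) a k = 0 := by
    intro x k h1 h2
    simp [Matrix.sub_apply, Matrix.smul_apply, Matrix.one_apply, hrowa k h1 h2, (Ne.symm h1)]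
  have rowB : ∀ (x : K) k, k ≠ a → k ≠ b → (M - x • 1) b k = 0 := by
    intro x k h1 h2
    simp [Matrix.sub_apply, Matrix.smul_apply, Matrix.one_apply, hrowb k h1 h2, (Ne.symm h2)]
  have rowC : ∀ (x : K) k, k ≠ c → k ≠ d → (M - x • 1) c k = 0 := by
    intro x k h1 h2
    simp [Matrix.sub_apply, Matrix.smul_apply, Matrix.one_apply, hrowc k h1 h2, (Ne.symm h1)]
  have colC : ∀ (x : K) k, k ≠ c → k ≠ d → (M - x • 1) k c = 0 := by
    intro x k h1 h2
    simp [Matrix.sub_apply, Matrix.smul_apply, Matrix.one_apply, hcolc k h1 h2, h1]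
  -- row a of products
  have mulrowA : ∀ (x y : K) (j : n), ((M - x • 1) * (M - y • 1)) a j
      = (M - x • 1) a a * (M - y • 1) a j + (M - x • 1) a b * (M - y • 1) b j := by
    intro x y j
    rw [Matrix.mul_apply]
    exact sum_sparse_left hab _ _ (rowA x)
  have mulcolC : ∀ (x y : K) (j : n), ((M - x • 1) * (M - y • 1)) j c
      = (M - x • 1) j c * (M - y • 1) c c + (M - x • 1) j d * (M - y • 1) d c := by
    intro x y j
    rw [Matrix.mul_apply]
    exact sum_sparse_right hcd _ _ (colC y)
  have ProwA : ∀ k, k ≠ a → k ≠ b → ((M - x₁ • 1) * (M - x₂ • 1)) a k = 0 := by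
    intro k h1 h2
    rw [mulrowA, rowA x₂ k h1 h2, rowB x₂ k h1 h2, mul_zero, mul_zero, add_zero]
  have hE : ∀ i j, ((M - x₁ • 1) * (M - x₂ • 1) * (M - x₃ • 1)) i j = 0 := by
    intro i j; rw [hmin]; simp
  have Eaa : (x₁ * x₂ + s * s) * -x₃ + (-x₁ * s + s * (s ^ 4 - u ^ 2 - x₂)) * s = 0 := by
    have h := hE a a
    rw [Matrix.mul_apply, sum_sparse_left hab _ _ ProwA, mulrowA, mulrowA] at h
    simp only [vaa, vab, vba, vbb] at h
    linear_combination h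
  have Eab : (x₁ * x₂ + s * s) * s
      + (-x₁ * s + s * (s ^ 4 - u ^ 2 - x₂)) * (s ^ 4 - u ^ 2 - x₃) = 0 := by
    have h := hE a b
    rw [Matrix.mul_apply, sum_sparse_left hab _ _ ProwA, mulrowA, mulrowA] at h
    simp only [vaa, vab, vba, vbb] at h
    linear_combination h
  have Ecc : -x₁ * (-x₂ * -x₃ + u ^ 2 * u ^ 2)
      + u ^ 2 * (u ^ 2 * -x₃ + -x₂ * u ^ 2) = 0 := by
    have h := hE c c
    rw [mul_assoc, Matrix.mul_apply, sum_sparse_left hcd _ _ (rowC x₁), mulcolC, mulcolC] at h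
    simp only [vcc, vcd, vdc, vdd] at h
    linear_combination h
  -- algebra
  have h6 : s ^ 6 - 1 ≠ 0 := sub_ne_zero.mpr hs6
  have h2u : s ^ 2 * u ^ 2 = 1 := by linear_combination (s * u + 1) * hsu
  have h4u : s ^ 4 * u ^ 4 = 1 := by
    linear_combination (s ^ 3 * u ^ 3 + s ^ 2 * u ^ 2 + s * u + 1) * hsu
  have hA' : s ^ 2 * (x₁ * x₂ * x₃) + s ^ 4 * (x₁ + x₂ + x₃) - s ^ 8 + s ^ 2 = 0 := by
    linear_combination (-s ^ 2) * Eaa - s ^ 2 * h2u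
  have hB' : s ^ 4 * (x₁ * x₂ * x₃) + (x₁ + x₂ + x₃) = 0 := by
    linear_combination (-s ^ 4) * Ecc - (x₁ + x₂ + x₃) * h4u
  have he1 : x₁ + x₂ + x₃ = s ^ 4 := by
    have h0 : (x₁ + x₂ + x₃ - s ^ 4) * (s ^ 6 - 1) = 0 := by
      linear_combination s ^ 2 * hA' - hB'
    rcases mul_eq_zero.mp h0 with h | h
    · exact sub_eq_zero.mp h
    · exact absurd h h6
  have he3 : x₁ * x₂ * x₃ = -1 := by
    have h0 : s ^ 4 * (x₁ * x₂ * x₃ + 1) = 0 := by linear_combination hB' - he1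
    rcases mul_eq_zero.mp h0 with h | h
    · exact absurd h (pow_ne_zero 4 hs)
    · linear_combination h
  have he2 : x₁ * x₂ + x₁ * x₃ + x₂ * x₃ = -u ^ 4 := by
    have h0 : s * (x₁ * x₂ + x₁ * x₃ + x₂ * x₃ + u ^ 4) = 0 := by
      linear_combination Eab + s * (s ^ 4 - u ^ 2) * he1 + s ^ 3 * h2u
    rcases mul_eq_zero.mp h0 with h | h
    · exact absurd h hs
    · linear_combination h
  refine multiset_of_sym x₁ x₂ x₃ (s ^ 4) (u ^ 2) (-u ^ 2) ?_ ?_ ?_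
  · linear_combination he1
  · linear_combination he2
  · linear_combination he3 + h4u
end

section
/- Let K be a field, u ∈ K with u ≠ 0 and u⁴ ≠ 1, n a finite index type, and M an n×n matrix over K. Assume there are indices a ≠ b such that rows a and b of M vanish outside columns a and b, with M_{a,a} = 0, M_{a,b} = M_{b,a} = u, M_{b,b} = u(u² − u⁻²); and indices c ≠ d such that rows c and d of M vanish outside columns c and d, with M_{c,c} = M_{d,d} = 0, M_{c,d} = M_{d,c} = u. If x₁, x₂, x₃, x₄ ∈ K satisfy (M − x₁I)(M − x₂I)(M − x₃I)(M − x₄I) = 0, then the multiset {x₁, x₂, x₃, x₄} equals the multiset {u³, u, −u, −u⁻¹}. -/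
/-!
Rows `a, b` of `M` span (as row vectors) an `M`-stable coordinate plane on which `M` acts by the
block `[[0, u], [u, u³ - u⁻¹]]`, whose characteristic polynomial is `(X - u³)(X + u⁻¹)`. By
Cayley–Hamilton on that block, `(X - u³)(X + u⁻¹)` kills the row vector `e_a`; since `e_a` and
`e_a M` are independent, it is the minimal polynomial of `e_a`, so it divides `∏ (X - xᵢ)`.
Likewise `(X - u)(X + u)` divides `∏ (X - xᵢ)` via rows `c, d`. As `u⁴ ≠ 1` the two quadratics
have no common root, so their product, of degree four, is `∏ (X - xᵢ)`.
-/

open Polynomial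

namespace Matrix

variable {R : Type*} [CommRing R] {n : Type*} [Fintype n] [DecidableEq n]

theorem dvd_of_aeval_row_eq_zero [Nontrivial R] {M : Matrix n n R} {i : n} {p q : R[X]}
    (hq : q.Monic) (hlow : ∀ r : R[X], r.degree < q.degree → aeval M r i = 0 → r = 0)
    (hqi : aeval M q i = 0) (hpi : aeval M p i = 0) : q ∣ p := by
  rw [← modByMonic_eq_zero_iff_dvd hq]
  refine hlow _ (degree_modByMonic_lt p hq) ?_
  have hsplit : aeval M p i = aeval M (p %ₘ q) i + aeval M q i ᵥ* aeval M (p /ₘ q) := by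
    conv_lhs => rw [← modByMonic_add_div p q]
    rw [map_add, map_mul, ← mul_apply_eq_vecMul]
    rfl
  rwa [hpi, hqi, zero_vecMul, add_zero, eq_comm] at hsplit

theorem eq_zero_of_aeval_row_eq_zero [NoZeroDivisors R] {M : Matrix n n R} {i j : n}
    (hij : i ≠ j) (hii : M i i = 0) (hMij : M i j ≠ 0) {r : R[X]} (hr : r.degree < 2)
    (hri : aeval M r i = 0) : r = 0 := by
  have hlin := eq_X_add_C_of_degree_le_one (Order.le_of_lt_succ hr)
  have hentry : ∀ k, r.coeff 1 * M i k + r.coeff 0 * (1 : Matrix n n R) i k = 0 := fun k => by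
    have := congrFun hri k
    rw [hlin] at this
    simpa [Algebra.algebraMap_eq_smul_one] using this
  have h1 : r.coeff 1 = 0 := by simpa [hij, hMij] using hentry j
  have h0 : r.coeff 0 = 0 := by simpa [hii, h1] using hentry i
  rw [hlin, h1, h0, C_0, zero_mul, zero_add]

theorem aeval_row_eq_zero_of_rows_supported {M : Matrix n n R} {a b : n} (hab : a ≠ b)
    (hrowa : ∀ j, j ≠ a → j ≠ b → M a j = 0) (hrowb : ∀ j, j ≠ a → j ≠ b → M b j = 0)
    {α β : R} (hsum : α + β = M a a + M b b) (hprod : α * β = M a a * M b b - M a b * M b a) :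
    aeval M ((X - C α) * (X - C β)) a = 0 := by
  ext j
  simp only [map_mul, map_sub, aeval_X, aeval_C, Algebra.algebraMap_eq_smul_one]
  rw [mul_apply, Fintype.sum_eq_add a b hab fun k hk => by
    simp only [sub_apply, hrowa k hk.1 hk.2, smul_apply, one_apply_ne' hk.1, smul_eq_mul,
      mul_zero, sub_self, zero_mul]]
  by_cases hja : j = a
  · subst j
    simp only [sub_apply, smul_apply, one_apply_eq, smul_eq_mul, mul_one, one_apply_ne hab,
      mul_zero, sub_zero, one_apply_ne hab.symm, Pi.zero_apply]
    linear_combination hprod - M a a * hsum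
  by_cases hjb : j = b
  · subst j
    simp only [sub_apply, smul_apply, one_apply_eq, smul_eq_mul, mul_one, one_apply_ne hab,
      mul_zero, sub_zero, Pi.zero_apply]
    linear_combination -M a b * hsum
  · simp [hrowa j hja hjb, hrowb j hja hjb, one_apply_ne' hja, one_apply_ne' hjb]

theorem pair_le_roots_of_aeval_eq_zero [IsDomain R] {M : Matrix n n R} {a b : n} (hab : a ≠ b)
    (hrowa : ∀ j, j ≠ a → j ≠ b → M a j = 0) (hrowb : ∀ j, j ≠ a → j ≠ b → M b j = 0)
    (haa : M a a = 0) (hMab : M a b ≠ 0) {α β : R} (hsum : α + β = M a a + M b b)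
    (hprod : α * β = M a a * M b b - M a b * M b a) {p : R[X]} (hp0 : p ≠ 0)
    (hp : aeval M p = 0) : {α, β} ≤ p.roots := by
  have hq : ((X - C α) * (X - C β)).Monic := (monic_X_sub_C α).mul (monic_X_sub_C β)
  have hdeg : ((X - C α) * (X - C β)).degree = 2 := by
    rw [degree_mul, degree_X_sub_C, degree_X_sub_C]; rfl
  rw [← Multiset.prod_X_sub_C_dvd_iff_le_roots hp0]
  simpa using dvd_of_aeval_row_eq_zero hq
    (fun r hr => eq_zero_of_aeval_row_eq_zero hab haa hMab (hdeg ▸ hr))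
    (aeval_row_eq_zero_of_rows_supported hab hrowa hrowb hsum hprod) (by rw [hp]; rfl)

end Matrix

theorem Multiset.disjoint_pair_neg_pair_pow_three_neg_inv {K : Type*} [Field K] {u : K}
    (hu : u ≠ 0) (hu4 : u ^ 4 ≠ 1) : Disjoint ({u, -u} : Multiset K) {u ^ 3, -u⁻¹} := by
  have hu2 : u ^ 2 ≠ 1 := fun h => hu4 (by linear_combination (u ^ 2 + 1) * h)
  have hu2' : u ^ 2 ≠ -1 := fun h => hu4 (by linear_combination (u ^ 2 - 1) * h)
  have hinv := mul_inv_cancel₀ hu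
  simp only [insert_eq_cons, disjoint_cons_left, singleton_disjoint, mem_cons, mem_singleton,
    not_or]
  refine ⟨⟨fun h => hu2 (mul_right_cancel₀ hu ?_), fun h => hu2' ?_⟩,
    fun h => hu2' (mul_right_cancel₀ hu ?_), fun h => hu2 ?_⟩
  · linear_combination -h
  · linear_combination u * h - hinv
  · linear_combination -h
  · linear_combination -u * h + hinv

theorem stmt_12 {K : Type*} [Field K] (u : K) (hu : u ≠ 0) (hu4 : u ^ 4 ≠ 1)
    {n : Type*} [Fintype n] [DecidableEq n] (M : Matrix n n K)
    (a b : n) (hab : a ≠ b)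
    (hrowa : ∀ j, j ≠ a → j ≠ b → M a j = 0)
    (hrowb : ∀ j, j ≠ a → j ≠ b → M b j = 0)
    (haa : M a a = 0) (hab' : M a b = u) (hba : M b a = u)
    (hbb : M b b = u * (u ^ 2 - u⁻¹ ^ 2))
    (c d : n) (hcd : c ≠ d)
    (hrowc : ∀ j, j ≠ c → j ≠ d → M c j = 0)
    (hrowd : ∀ j, j ≠ c → j ≠ d → M d j = 0)
    (hcc : M c c = 0) (hdd : M d d = 0)
    (hcd' : M c d = u) (hdc : M d c = u)
    (x₁ x₂ x₃ x₄ : K)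
    (hmin : (M - x₁ • 1) * (M - x₂ • 1) * (M - x₃ • 1) * (M - x₄ • 1) = 0) :
    ({x₁, x₂, x₃, x₄} : Multiset K) = {u ^ 3, u, -u, -u⁻¹} := by
  set s : Multiset K := {x₁, x₂, x₃, x₄}
  set P : K[X] := (s.map fun x => X - C x).prod
  have hP0 : P ≠ 0 := (monic_multiset_prod_of_monic _ _ fun x _ => monic_X_sub_C x).ne_zero
  have hP : aeval M P = 0 := by
    simpa [P, s, Algebra.algebraMap_eq_smul_one, mul_assoc] using hmin
  have hA : {u ^ 3, -u⁻¹} ≤ s := roots_multiset_prod_X_sub_C s ▸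
    Matrix.pair_le_roots_of_aeval_eq_zero hab hrowa hrowb haa (hab' ▸ hu)
      (by rw [haa, hbb]; field_simp; ring) (by rw [haa, hab', hba]; field_simp; ring) hP0 hP
  have hC : {u, -u} ≤ s := roots_multiset_prod_X_sub_C s ▸
    Matrix.pair_le_roots_of_aeval_eq_zero hcd hrowc hrowd hcc (hcd' ▸ hu)
      (by rw [hcc, hdd]; ring) (by rw [hcc, hcd', hdc]; ring) hP0 hP
  have hle : ({u, -u} : Multiset K) + {u ^ 3, -u⁻¹} ≤ s := by
    classical
    rw [Multiset.add_eq_union_iff_disjoint.mpr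
      (Multiset.disjoint_pair_neg_pair_pow_three_neg_inv hu hu4)]
    exact Multiset.union_le hC hA
  refine (Multiset.eq_of_le_of_card_le ?_ ?_).symm
  · simpa [Multiset.insert_eq_cons] using hle
  · simp [s]
end
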